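/- Consider the single-cache online caching problem with library size N = 2 and cache capacity C = 1, where at each slot t the policy chooses γ_t ∈ [0,1] (fraction of file 1 cached) before the request w_t ∈ {0,1} arrives, the per-slot reward is γ_t w_t + (1-γ_t)(1-w_t), and the regret is R_T = sup over request sequences of [max(Σ w_t, T - Σ w_t) - Σ_t (γ_t w_t + (1-γ_t)(1-w_t))]. Then every online policy satisfies R_T ≥ sqrt(T/(2π)) - 1/(2 sqrt(2πT)) for all T ≥ 1. -/

import Mathlib

/-!
Average over all `2 ^ T` request sequences. Since `γ_t` cannot see `w_t`, flipping `w_t` pairs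
up sequences whose slot-`t` rewards add up to `1`, so every policy collects exactly `T / 2` on
average. The hindsight benchmark `max (k, T - k)` averages to `T / 2 + E|Z - T / 2|` with
`Z ~ Bin(T, 1/2)`; this mean absolute deviation telescopes to `T * C(T - 1, ⌊(T - 1) / 2⌋) / 2 ^ T`,
which Wallis' inequality bounds below by `√(T / 2π) - 1 / (2 √(2πT))`. Some sequence is at least
as bad as the average.
-/

open Finset Real

lemma cast_succ_choose_succ_mul_sub (n j : ℕ) :
    ((n + 1).choose (j + 1) : ℝ) * ((n : ℝ) - j) = (n + 1) * n.choose (j + 1) := by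
  rcases le_or_gt j n with hj | hj
  · have h := Nat.choose_mul_succ_eq n (j + 1)
    rw [show n + 1 - (j + 1) = n - j by omega] at h
    rw [← Nat.cast_sub hj]
    exact_mod_cast h.symm.trans (Nat.mul_comm _ _)
  · rw [Nat.choose_eq_zero_of_lt (by omega : n + 1 < j + 1),
      Nat.choose_eq_zero_of_lt (by omega : n < j + 1)]
    simp

/-- `(n + 1 - 2k) C(n + 1, k) = (n + 1) (C(n, k) - C(n, k - 1))`, so the sum telescopes. -/
lemma sum_range_choose_mul_sub_two_mul (n j : ℕ) :
    ∑ k ∈ range (j + 1), ((n + 1).choose k : ℝ) * ((n + 1 : ℝ) - 2 * k) =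
      (n + 1) * n.choose j := by
  induction j with
  | zero => simp
  | succ j ih =>
    have h₁ : ((n + 1).choose (j + 1) : ℝ) * (j + 1) = (n + 1) * n.choose j := by
      exact_mod_cast (Nat.add_one_mul_choose_eq n j).symm
    rw [sum_range_succ, ih, ← h₁, ← cast_succ_choose_succ_mul_sub]
    push_cast
    ring

lemma sum_range_choose_mul_abs_sub_two_mul (n : ℕ) :
    ∑ k ∈ range (n + 2), ((n + 1).choose k : ℝ) * |(n + 1 : ℝ) - 2 * k| =
      2 * (n + 1) * n.choose (n / 2) := by
  set f : ℕ → ℝ := fun k ↦ ((n + 1).choose k : ℝ) * ((n + 1 : ℝ) - 2 * k)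
  have hsplit (g : ℕ → ℝ) := sum_range_add_sum_Ico g (show n / 2 + 1 ≤ n + 2 by omega)
  have hlow : ∀ k ∈ range (n / 2 + 1),
      ((n + 1).choose k : ℝ) * |(n + 1 : ℝ) - 2 * k| = f k := by
    intro k hk
    have : (2 * k : ℝ) ≤ n := by exact_mod_cast (by grind : 2 * k ≤ n)
    rw [abs_of_nonneg (by linarith)]
  have hhigh : ∀ k ∈ Ico (n / 2 + 1) (n + 2),
      ((n + 1).choose k : ℝ) * |(n + 1 : ℝ) - 2 * k| = -f k := by
    intro k hk
    have : (n + 1 : ℝ) ≤ 2 * k := by exact_mod_cast (by grind : n + 1 ≤ 2 * k)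
    rw [abs_of_nonpos (by linarith)]
    ring
  -- The full signed sum vanishes, so the terms past the middle weigh as much as those before it.
  have htotal := sum_range_choose_mul_sub_two_mul n (n + 1)
  rw [Nat.choose_succ_self, Nat.cast_zero, mul_zero, ← hsplit f] at htotal
  have hhalf : ∑ k ∈ range (n / 2 + 1), f k = (n + 1) * n.choose (n / 2) :=
    sum_range_choose_mul_sub_two_mul n (n / 2)
  rw [← hsplit, sum_congr rfl hlow, sum_congr rfl hhigh, sum_neg_distrib]
  linarith

lemma max_sub_eq_add_abs_div_two (a c : ℝ) : max a (c - a) = (c + |c - 2 * a|) / 2 := by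
  rcases le_total a (c - a) with h | h
  · rw [max_eq_right h, abs_of_nonneg (by linarith)]; ring
  · rw [max_eq_left h, abs_of_nonpos (by linarith)]; ring

lemma sum_range_choose_mul_max (n : ℕ) :
    ∑ k ∈ range (n + 2), ((n + 1).choose k : ℝ) * max (k : ℝ) ((n + 1 : ℝ) - k) =
      (n + 1) * 2 ^ (n + 1) / 2 + (n + 1) * n.choose (n / 2) := by
  have hchoose : ∑ k ∈ range (n + 2), ((n + 1).choose k : ℝ) = 2 ^ (n + 1) := by
    exact_mod_cast Nat.sum_range_choose (n + 1)
  simp only [max_sub_eq_add_abs_div_two, mul_div_assoc', mul_add, ← sum_div, sum_add_distrib,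
    ← sum_mul, hchoose, sum_range_choose_mul_abs_sub_two_mul]
  ring

lemma two_mul_sixteen_pow_le_pi_mul_centralBinom_sq (m : ℕ) :
    2 * 16 ^ m ≤ π * (2 * m + 1) * (m.centralBinom : ℝ) ^ 2 := by
  have hW := Real.Wallis.W_le m
  rw [Real.Wallis.W_eq_factorial_ratio, div_le_div_iff₀ (by positivity) two_pos] at hW
  have hfac : ((2 * m).factorial : ℝ) = m.centralBinom * m.factorial * m.factorial := by
    rw [Nat.centralBinom_eq_two_mul_choose, two_mul]
    exact_mod_cast (Nat.add_choose_mul_factorial_mul_factorial m m).symm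
  rw [hfac, pow_mul] at hW
  refine le_of_mul_le_mul_right ?_ (by positivity : (0 : ℝ) < m.factorial ^ 4)
  convert hW using 1 <;> norm_num <;> ring

lemma centralBinom_succ_eq_two_mul_choose (m : ℕ) :
    (m + 1).centralBinom = 2 * (2 * m + 1).choose m := by
  rw [Nat.centralBinom_eq_two_mul_choose, show 2 * (m + 1) = 2 * m + 1 + 1 by ring,
    Nat.choose_succ_succ, Nat.choose_symm_half]
  ring

lemma sq_mul_four_pow_le_pi_mul_choose_half_sq (n : ℕ) :
    (2 * n + 1 : ℝ) ^ 2 * 4 ^ (n + 1) ≤ 8 * π * (n + 1) ^ 3 * (n.choose (n / 2) : ℝ) ^ 2 := by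
  obtain ⟨m, rfl | rfl⟩ : ∃ m, n = 2 * m ∨ n = 2 * m + 1 := ⟨n / 2, by omega⟩
  · have hW := two_mul_sixteen_pow_le_pi_mul_centralBinom_sq m
    rw [show 2 * m / 2 = m by omega, ← Nat.centralBinom_eq_two_mul_choose,
      show (4 : ℝ) ^ (2 * m + 1) = 4 * 16 ^ m by rw [pow_succ, pow_mul]; ring]
    push_cast
    -- Wallis leaves `(4m + 1)² ≤ (4m + 2)²`.
    nlinarith [mul_le_mul_of_nonneg_left hW (by positivity : (0 : ℝ) ≤ 8 * (2 * m + 1) ^ 2),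
      (by positivity : (0 : ℝ) ≤ 16 ^ m)]
  · have hW := two_mul_sixteen_pow_le_pi_mul_centralBinom_sq (m + 1)
    have hP : 0 ≤ π * ((m + 1).centralBinom : ℝ) ^ 2 := by positivity
    rw [show (2 * m + 1) / 2 = m by omega, show 2 * m + 1 + 1 = 2 * (m + 1) by ring, pow_mul,
      show ((2 * m + 1).choose m : ℝ) = (m + 1).centralBinom / 2 by
        rw [centralBinom_succ_eq_two_mul_choose]; push_cast; ring]
    push_cast at hW ⊢
    -- Wallis leaves `(4m + 3)² (2m + 3) ≤ 32 (m + 1)³`.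
    nlinarith [mul_le_mul_of_nonneg_left hW (by positivity : (0 : ℝ) ≤ (4 * m + 3) ^ 2),
      mul_nonneg hP (by positivity : (0 : ℝ) ≤ 10 * m + 5)]

lemma sqrt_div_two_pi_sub_le_mul_choose_half_div_two_pow (n : ℕ) :
    √((n + 1) / (2 * π)) - 1 / (2 * √(2 * π * (n + 1))) ≤
      (n + 1) * n.choose (n / 2) / 2 ^ (n + 1) := by
  set s := √(2 * π * (n + 1))
  have hs : 0 < s := by positivity
  have hs2 : s ^ 2 = 2 * π * (n + 1) := Real.sq_sqrt (by positivity)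
  have hsqrt : √((n + 1) / (2 * π)) = (n + 1) / s := by
    rw [Real.sqrt_eq_iff_mul_self_eq_of_pos (by positivity), ← sq, div_pow, hs2]
    field_simp
  rw [hsqrt, div_sub_div _ _ hs.ne' (by positivity),
    div_le_div_iff₀ (by positivity) (by positivity)]
  have key : (2 * n + 1 : ℝ) * 2 ^ (n + 1) ≤ 2 * s * ((n + 1) * n.choose (n / 2)) := by
    refine (sq_le_sq₀ (by positivity) (by positivity)).mp ?_
    calc ((2 * n + 1 : ℝ) * 2 ^ (n + 1)) ^ 2 = (2 * n + 1 : ℝ) ^ 2 * 4 ^ (n + 1) := by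
          rw [mul_pow, ← pow_mul, pow_mul']; norm_num
      _ ≤ 8 * π * (n + 1) ^ 3 * (n.choose (n / 2) : ℝ) ^ 2 :=
          sq_mul_four_pow_le_pi_mul_choose_half_sq n
      _ = (2 * s * ((n + 1) * n.choose (n / 2))) ^ 2 := by rw [mul_pow, mul_pow, hs2]; ring
  nlinarith [mul_le_mul_of_nonneg_left key hs.le]

lemma sum_fun_bool_apply_card {ι M : Type*} [Fintype ι] [DecidableEq ι] [AddCommMonoid M]
    (f : ℕ → M) :
    ∑ w : ι → Bool, f #{t | w t} =
      ∑ k ∈ range (Fintype.card ι + 1), (Fintype.card ι).choose k • f k := by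
  let e : (ι → Bool) ≃ Finset ι :=
    { toFun := fun w ↦ {t | w t}
      invFun := fun s t ↦ t ∈ s
      left_inv := fun w ↦ by ext; simp
      right_inv := fun s ↦ by ext; simp }
  rw [← card_univ, ← sum_powerset_apply_card, powerset_univ]
  exact Fintype.sum_equiv e _ _ fun _ ↦ rfl

lemma sum_reward_eq_of_flip_invariant {ι : Type*} [Fintype ι] [DecidableEq ι]
    (g : (ι → Bool) → ℝ) (t : ι) (hg : ∀ w, g (Function.update w t (!w t)) = g w) :
    ∑ w : ι → Bool, (g w * (if w t then 1 else 0) + (1 - g w) * (if w t then 0 else 1)) =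
      2 ^ Fintype.card ι / 2 := by
  set r : (ι → Bool) → ℝ := fun w ↦
    g w * (if w t then 1 else 0) + (1 - g w) * (if w t then 0 else 1)
  set flip : (ι → Bool) → ι → Bool := fun w ↦ Function.update w t (!w t)
  have hflip : Function.Involutive flip := fun w ↦ by simp [flip]
  have hpair (w : ι → Bool) : r w + r (flip w) = 1 := by
    have hflip_t : flip w t = !w t := Function.update_self _ _ _
    have hg_flip : g (flip w) = g w := hg w
    simp only [r, hg_flip, hflip_t]
    cases w t <;> simp
  have hsum : ∑ w, r (flip w) = ∑ w, r w := Equiv.sum_comp (hflip.toPerm _) r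
  have htwo : ∑ w, r w + ∑ w, r (flip w) = 2 ^ Fintype.card ι := by
    simp [← sum_add_distrib, hpair]
  linarith

lemma sum_adapted_reward (T : ℕ) (γ : (Fin T → Bool) → Fin T → ℝ)
    (hadapt : ∀ w w' : Fin T → Bool, ∀ t, (∀ s, s < t → w s = w' s) → γ w t = γ w' t) :
    ∑ w : Fin T → Bool, ∑ t, (γ w t * (if w t then (1 : ℝ) else 0)
        + (1 - γ w t) * (if w t then (0 : ℝ) else 1)) = T * 2 ^ T / 2 := by
  rw [sum_comm]
  have hslot (t : Fin T) := sum_reward_eq_of_flip_invariant (γ · t) t fun w ↦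
    hadapt _ _ t fun s hs ↦ Function.update_of_ne hs.ne _ _
  simp only [hslot, sum_const, card_univ, Fintype.card_fin, nsmul_eq_mul]
  ring

theorem stmt_15_general (T : ℕ) (hT : 1 ≤ T)
    (γ : (Fin T → Bool) → Fin T → ℝ)
    (hadapt : ∀ w w' : Fin T → Bool, ∀ t, (∀ s, s < t → w s = w' s) → γ w t = γ w' t) :
    ∃ w : Fin T → Bool,
      max (∑ t, (if w t then (1 : ℝ) else 0))
          ((T : ℝ) - ∑ t, (if w t then (1 : ℝ) else 0))
        - ∑ t, (γ w t * (if w t then (1 : ℝ) else 0)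
                + (1 - γ w t) * (if w t then (0 : ℝ) else 1))
      ≥ Real.sqrt ((T : ℝ) / (2 * π)) - 1 / (2 * Real.sqrt (2 * π * T)) := by
  obtain ⟨n, rfl⟩ : ∃ n, T = n + 1 := ⟨T - 1, by omega⟩
  have hbest : ∑ w : Fin (n + 1) → Bool, max (∑ t, (if w t then (1 : ℝ) else 0))
      (((n + 1 : ℕ) : ℝ) - ∑ t, (if w t then (1 : ℝ) else 0)) =
        (n + 1) * 2 ^ (n + 1) / 2 + (n + 1) * n.choose (n / 2) := by
    simp only [sum_boole]
    rw [sum_fun_bool_apply_card (fun k ↦ max (k : ℝ) (((n + 1 : ℕ) : ℝ) - k))]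
    simpa using sum_range_choose_mul_max n
  have hbound := sqrt_div_two_pi_sub_le_mul_choose_half_div_two_pow n
  refine (exists_le_of_sum_le univ_nonempty ?_).imp fun w ⟨_, hw⟩ ↦ hw
  rw [sum_const, sum_sub_distrib, hbest, sum_adapted_reward _ γ hadapt, card_univ,
    Fintype.card_fun, Fintype.card_bool, Fintype.card_fin, nsmul_eq_mul]
  push_cast
  rw [le_div_iff₀ (by positivity)] at hbound
  linarith

/-- Single cache, library size `N = 2`, capacity `C = 1`.  An online policy chooses
`γ w t ∈ [0,1]` (the fraction of file 1 cached at slot `t`), depending only on the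
past requests `w s, s < t`; the request at slot `t` is `w t ∈ {0,1}` and the reward
is `γ_t w_t + (1-γ_t)(1-w_t)`.  There is a request sequence on which the regret
against the best fixed configuration is at least `√(T/(2π)) - 1/(2√(2πT))`;
hence the worst-case regret of every online policy is at least this much. -/
theorem stmt_15 (T : ℕ) (hT : 1 ≤ T)
    (γ : (Fin T → Bool) → Fin T → ℝ)
    (hγ : ∀ w t, γ w t ∈ Set.Icc (0 : ℝ) 1)
    (hadapt : ∀ w w' : Fin T → Bool, ∀ t, (∀ s, s < t → w s = w' s) → γ w t = γ w' t) :
    ∃ w : Fin T → Bool,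
      max (∑ t, (if w t then (1 : ℝ) else 0))
          ((T : ℝ) - ∑ t, (if w t then (1 : ℝ) else 0))
        - ∑ t, (γ w t * (if w t then (1 : ℝ) else 0)
                + (1 - γ w t) * (if w t then (0 : ℝ) else 1))
      ≥ Real.sqrt ((T : ℝ) / (2 * π)) - 1 / (2 * Real.sqrt (2 * π * T)) :=
  stmt_15_general T hT γ hadapt
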